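/- arXiv:0911.5147 — 3 statements merged into one kernel-verified Lean document; each statement's English description precedes it below -/
import Mathlib

section
/- Let b : ℝⁿ → ℝ be a nonnegative smooth bump function with b ≤ 1 and let u : ℝⁿ → ℝ be upper semicontinuous with u ≤ 1. Let m ∈ [0, 1/2] and suppose the function u + m·b attains its global maximum at x₀ with u(x₀) + m·b(x₀) > 1. Then for every y with u(x₀ + y) ≤ 0, the second difference satisfies δu(x₀,y) + m·δb(x₀,y) ≤ -1/2, where δw(x₀,y) = w(x₀+y) + w(x₀-y) - 2w(x₀). -/
open MeasureTheory Real

/-- If `u ≤ 1` is upper semicontinuous, `b` is a smooth bump with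
`0 ≤ b ≤ 1`, `m ∈ [0,1/2]`, and `u + m b` attains a global maximum `> 1` at `x₀`,
then every `y` with `u(x₀+y) ≤ 0` satisfies `δu(x₀,y) + m δb(x₀,y) ≤ -1/2`. -/
theorem stmt6 (n : ℕ) (b : EuclideanSpace ℝ (Fin n) → ℝ)
    (hb_smooth : ContDiff ℝ (⊤ : ℕ∞) b) (hb_nonneg : ∀ x, 0 ≤ b x) (hb_le : ∀ x, b x ≤ 1)
    (u : EuclideanSpace ℝ (Fin n) → ℝ) (hu_usc : UpperSemicontinuous u)
    (hu_le : ∀ x, u x ≤ 1)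
    (m : ℝ) (hm : m ∈ Set.Icc (0:ℝ) (1/2))
    (x₀ : EuclideanSpace ℝ (Fin n))
    (hmax : ∀ x, u x + m * b x ≤ u x₀ + m * b x₀)
    (hval : u x₀ + m * b x₀ > 1) :
    ∀ y, u (x₀ + y) ≤ 0 →
      (u (x₀ + y) + u (x₀ - y) - 2 * u x₀)
        + m * (b (x₀ + y) + b (x₀ - y) - 2 * b x₀) ≤ -(1/2) := by
  intro y hy
  have h1 := hmax (x₀ + y)
  have h2 := hmax (x₀ - y)
  have h3 := hb_le (x₀ + y)
  have h4 := hb_nonneg (x₀ + y)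
  obtain ⟨hm0, hm1⟩ := hm
  nlinarith [mul_nonneg hm0 h4, mul_le_of_le_one_right hm0 h3]
end

section
/- Fix constants 0 < λ ≤ Λ, n ≥ 1, and K ≥ 1. For every ε₀ > 0 there exists α > 0 small (depending only on n, Λ, K, ε₀) such that the following holds: if v : ℝⁿ → ℝ satisfies |v(x)| ≤ 2(K|x|)^α - 1 for |x| ≥ 1 and |v| ≤ 1 on B₁, and for x ∈ B_{K/2} the tail error is defined by E(x) = ∫_{|x+y| ≥ K} Λ (v(x+y) - 1)⁺ / |y|^{n+1} dy, then E(x) ≤ ε₀ for all x ∈ B_{K/2}. -/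
open MeasureTheory Real

lemma aux_exp_sub_one_le (t : ℝ) (ht : 0 ≤ t) : Real.exp t - 1 ≤ t * Real.exp t := by
  have h1 := Real.add_one_le_exp (-t)
  have h2 : Real.exp (-t) * Real.exp t = 1 := by
    rw [← Real.exp_add]; simp
  nlinarith [Real.exp_pos t]

lemma aux_rpow_sub_one (s α : ℝ) (hs : 1 ≤ s) (hα : 0 < α) (hα4 : α ≤ 1/4) :
    s ^ α - 1 ≤ 4 * α * s ^ ((1:ℝ)/2) := by
  have hs0 : (0:ℝ) < s := lt_of_lt_of_le one_pos hs
  have hlog : 0 ≤ Real.log s := Real.log_nonneg hs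
  have h1 : s ^ α = Real.exp (Real.log s * α) := Real.rpow_def_of_pos hs0 α
  have h2 : s ^ α - 1 ≤ (Real.log s * α) * s ^ α := by
    rw [h1]; exact aux_exp_sub_one_le _ (mul_nonneg hlog hα.le)
  have hq : (0:ℝ) < s ^ ((1:ℝ)/4) := Real.rpow_pos_of_pos hs0 _
  have hlog4 : Real.log s ≤ 4 * s ^ ((1:ℝ)/4) := by
    have := Real.log_le_sub_one_of_pos hq
    rw [Real.log_rpow hs0] at this
    nlinarith
  have hsa : s ^ α ≤ s ^ ((1:ℝ)/4) :=
    Real.rpow_le_rpow_of_exponent_le hs (by linarith)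
  have hsa0 : 0 ≤ s ^ α := Real.rpow_nonneg hs0.le _
  have hmul : s ^ ((1:ℝ)/4) * s ^ ((1:ℝ)/4) = s ^ ((1:ℝ)/2) := by
    rw [← Real.rpow_add hs0]; norm_num
  calc s ^ α - 1 ≤ (Real.log s * α) * s ^ α := h2
    _ ≤ (4 * s ^ ((1:ℝ)/4) * α) * s ^ ((1:ℝ)/4) := by
        apply mul_le_mul _ hsa hsa0 (by positivity)
        exact mul_le_mul_of_nonneg_right hlog4 hα.le
    _ = 4 * α * s ^ ((1:ℝ)/2) := by rw [← hmul]; ring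

set_option maxHeartbeats 1000000 in
/-- The tail error made when truncating at level 1 in the computation of
the extremal operator: if `|v| ≤ 1` on `B₁` and `|v(x)| ≤ 2(K|x|)^α - 1` for `|x| ≥ 1`,
then the tail `E(x) = ∫_{|x+y| ≥ K} Λ (v(x+y)-1)⁺/|y|^{n+1} dy` is at most `ε₀` for all
`x ∈ B_{K/2}`, provided `α > 0` is small depending only on `n`, `Λ`, `K`, `ε₀`. -/
theorem stmt17 (n : ℕ) (hn : 1 ≤ n) (Λ K ε₀ : ℝ) (hΛ : 0 < Λ) (hK : 1 ≤ K)
    (hε₀ : 0 < ε₀) :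
    ∃ α > (0:ℝ), ∀ v : EuclideanSpace ℝ (Fin n) → ℝ,
      (∀ x, ‖x‖ ≤ 1 → |v x| ≤ 1) →
      (∀ x, 1 ≤ ‖x‖ → |v x| ≤ 2 * (K * ‖x‖) ^ α - 1) →
      ∀ x : EuclideanSpace ℝ (Fin n), ‖x‖ ≤ K / 2 →
        (∫ y in {y : EuclideanSpace ℝ (Fin n) | K ≤ ‖x + y‖},
            Λ * max (v (x + y) - 1) 0 / ‖y‖ ^ (n + 1)) ≤ ε₀ := by
  set p : ℝ := n + 1/2 with hp
  have hp0 : 0 < p := by positivity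
  have hfr : (Module.finrank ℝ (EuclideanSpace ℝ (Fin n)) : ℝ) < p := by
    rw [finrank_euclideanSpace_fin, hp]; norm_num
  have hgint : Integrable (fun y : EuclideanSpace ℝ (Fin n) => (1 + ‖y‖) ^ (-p)) volume :=
    integrable_one_add_norm hfr
  obtain ⟨I, hI⟩ : ∃ I : ℝ, I = ∫ y : EuclideanSpace ℝ (Fin n), (1 + ‖y‖) ^ (-p) := ⟨_, rfl⟩
  have hInn : 0 ≤ I := hI ▸
    integral_nonneg fun y => Real.rpow_nonneg (by positivity) _
  obtain ⟨C0, hC0⟩ : ∃ C0 : ℝ, C0 = Λ * (8 * (2*K) ^ ((1:ℝ)/2) * 3 ^ p) := ⟨_, rfl⟩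
  have hC0pos : 0 < C0 := by
    rw [hC0]
    have h2K : (0:ℝ) < (2*K) ^ ((1:ℝ)/2) := Real.rpow_pos_of_pos (by linarith) _
    have h3 : (0:ℝ) < (3:ℝ) ^ p := Real.rpow_pos_of_pos (by norm_num) _
    positivity
  obtain ⟨α, hαpos, hα4, hαε⟩ : ∃ α : ℝ, 0 < α ∧ α ≤ 1/4 ∧ α ≤ ε₀ / (C0 * (I + 1)) :=
    ⟨min (1/4) (ε₀ / (C0 * (I + 1))),
      lt_min (by norm_num) (div_pos hε₀ (by positivity)),
      min_le_left _ _, min_le_right _ _⟩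
  refine ⟨α, hαpos, ?_⟩
  intro v hv1 hv2 x hx
  set S : Set (EuclideanSpace ℝ (Fin n)) := {y : EuclideanSpace ℝ (Fin n) | K ≤ ‖x + y‖} with hS
  have hSmeas : MeasurableSet S := by
    have : IsClosed S := isClosed_le continuous_const (by fun_prop)
    exact this.measurableSet
  set g : EuclideanSpace ℝ (Fin n) → ℝ := fun y => C0 * α * (1 + ‖y‖) ^ (-p) with hg
  have hgint' : Integrable g volume := hgint.const_mul _
  have key : ∀ y ∈ S, Λ * max (v (x + y) - 1) 0 / ‖y‖ ^ (n + 1) ≤ g y := by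
    intro y hy
    have hxy : K ≤ ‖x + y‖ := hy
    have hxy1 : 1 ≤ ‖x + y‖ := le_trans hK hxy
    have hyK : K/2 ≤ ‖y‖ := by
      have h := norm_le_norm_add_norm_sub' (x + y) x
      simp only [add_sub_cancel_left] at h
      linarith
    have hy0 : (0:ℝ) < ‖y‖ := by linarith
    have hs1 : 1 ≤ K * ‖x + y‖ := one_le_mul_of_one_le_of_one_le hK hxy1
    have hs0 : (0:ℝ) < K * ‖x + y‖ := by linarith
    have hroot0 : (0:ℝ) ≤ ‖y‖ ^ ((1:ℝ)/2) := Real.rpow_nonneg hy0.le _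
    have h2K0 : (0:ℝ) ≤ (2*K) ^ ((1:ℝ)/2) := Real.rpow_nonneg (by linarith) _
    have hmax : max (v (x + y) - 1) 0 ≤ 2 * ((K * ‖x + y‖) ^ α - 1) := by
      have h1 : v (x + y) - 1 ≤ 2 * ((K * ‖x + y‖) ^ α - 1) := by
        have ha := hv2 (x + y) hxy1
        have hb := le_abs_self (v (x + y))
        linarith
      have h2 : (0:ℝ) ≤ 2 * ((K * ‖x + y‖) ^ α - 1) := by
        have : (1:ℝ) ≤ (K * ‖x + y‖) ^ α := Real.one_le_rpow hs1 hαpos.le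
        linarith
      exact max_le h1 h2
    have hstep : (K * ‖x + y‖) ^ α - 1 ≤ 4 * α * (K * ‖x + y‖) ^ ((1:ℝ)/2) :=
      aux_rpow_sub_one _ _ hs1 hαpos hα4
    have hroot : (K * ‖x + y‖) ^ ((1:ℝ)/2) ≤ (2*K) ^ ((1:ℝ)/2) * ‖y‖ ^ ((1:ℝ)/2) := by
      rw [← Real.mul_rpow (by linarith) hy0.le]
      apply Real.rpow_le_rpow hs0.le _ (by norm_num)
      have h := norm_add_le x y
      nlinarith [mul_le_mul_of_nonneg_left (show ‖x+y‖ ≤ 2*‖y‖ by linarith) (by linarith : (0:ℝ) ≤ K)]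
    have hM : max (v (x + y) - 1) 0 ≤ 8 * α * ((2*K) ^ ((1:ℝ)/2) * ‖y‖ ^ ((1:ℝ)/2)) := by
      have h1 : 4 * α * (K * ‖x + y‖) ^ ((1:ℝ)/2) ≤
          4 * α * ((2*K) ^ ((1:ℝ)/2) * ‖y‖ ^ ((1:ℝ)/2)) := by
        apply mul_le_mul_of_nonneg_left hroot (by positivity)
      linarith
    have hP : (0:ℝ) < ‖y‖ ^ (n + 1) := pow_pos hy0 _
    have hpow : ‖y‖ ^ (n + 1) = ‖y‖ ^ ((n:ℝ) + 1) := by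
      rw [← Real.rpow_natCast ‖y‖ (n+1)]; push_cast; ring_nf
    have hdiv : ‖y‖ ^ ((1:ℝ)/2) / ‖y‖ ^ ((n:ℝ) + 1) = ‖y‖ ^ (-p) := by
      rw [← Real.rpow_sub hy0]; congr 1; rw [hp]; ring
    have h3y : ‖y‖ ^ (-p) ≤ 3 ^ p * (1 + ‖y‖) ^ (-p) := by
      have ha : (0:ℝ) < ‖y‖ ^ p := Real.rpow_pos_of_pos hy0 _
      have hb : (0:ℝ) < (1 + ‖y‖) ^ p := Real.rpow_pos_of_pos (by positivity) _
      have h2 : (1 + ‖y‖) ^ p ≤ 3 ^ p * ‖y‖ ^ p := by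
        rw [← Real.mul_rpow (by norm_num) hy0.le]
        apply Real.rpow_le_rpow (by positivity) _ hp0.le
        linarith
      rw [Real.rpow_neg hy0.le, Real.rpow_neg (by positivity : (0:ℝ) ≤ 1 + ‖y‖)]
      rw [show (3:ℝ) ^ p * ((1 + ‖y‖) ^ p)⁻¹ = 3 ^ p / (1 + ‖y‖) ^ p from (div_eq_mul_inv _ _).symm,
        inv_eq_one_div, div_le_div_iff₀ ha hb]
      nlinarith
    calc Λ * max (v (x + y) - 1) 0 / ‖y‖ ^ (n + 1)
        ≤ Λ * (8 * α * ((2*K) ^ ((1:ℝ)/2) * ‖y‖ ^ ((1:ℝ)/2))) / ‖y‖ ^ (n + 1) := by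
          exact div_le_div_of_nonneg_right (mul_le_mul_of_nonneg_left hM hΛ.le) hP.le
      _ = Λ * (8 * α * (2*K) ^ ((1:ℝ)/2)) * (‖y‖ ^ ((1:ℝ)/2) / ‖y‖ ^ ((n:ℝ) + 1)) := by
          rw [← hpow]; ring
      _ = Λ * (8 * α * (2*K) ^ ((1:ℝ)/2)) * ‖y‖ ^ (-p) := by rw [hdiv]
      _ ≤ Λ * (8 * α * (2*K) ^ ((1:ℝ)/2)) * (3 ^ p * (1 + ‖y‖) ^ (-p)) := by
          apply mul_le_mul_of_nonneg_left h3y (by positivity)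
      _ = g y := by rw [hg, hC0]; ring
  by_cases hfi : IntegrableOn
      (fun y => Λ * max (v (x + y) - 1) 0 / ‖y‖ ^ (n + 1)) S volume
  · have hgnn : 0 ≤ᵐ[volume] g := Filter.Eventually.of_forall fun y => by
      have : (0:ℝ) ≤ (1 + ‖y‖) ^ (-p) := Real.rpow_nonneg (by positivity) _
      have := hC0pos
      positivity
    calc (∫ y in S, Λ * max (v (x + y) - 1) 0 / ‖y‖ ^ (n + 1))
        ≤ ∫ y in S, g y := setIntegral_mono_on hfi hgint'.integrableOn hSmeas key
      _ ≤ ∫ y, g y := setIntegral_le_integral hgint' hgnn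
      _ = C0 * α * I := by rw [hg, hI]; exact integral_const_mul _ _
      _ ≤ ε₀ := by
          have h1 : α * (C0 * (I + 1)) ≤ ε₀ :=
            (le_div_iff₀ (by positivity)).mp hαε
          nlinarith [mul_pos hC0pos hαpos]
  · rw [integral_undef hfi]
    exact hε₀.le
end

section
/- Let ω : [0,∞) → [0,∞) be a modulus of continuity (continuous, nondecreasing, ω(0)=0), and let u, v : ℝⁿ × [0,∞) → ℝ be bounded functions such that for every ε > 0 there is δ > 0 with u(x,t) ≤ v(y,s) + ε whenever |x-y| < δ and |t|, |s| < δ. Then for ε > 0 small, the sup-convolution u^ε and inf-convolution v_ε satisfy u^ε(x,0) ≤ v_ε(x,0) + ω̃(ε) for all x ∈ ℝⁿ, for some modulus of continuity ω̃ depending only on ω and the L^∞ bounds of u, v. -/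
open Set Filter Topology

/-!
Compare any competitor of the sup-convolution at `(x, 0)` with any competitor of the
inf-convolution. A point `(y, s)` whose penalty `(‖x - y‖² + s²) / ε` exceeds `2M` cannot compete,
since the bounds `|u|, |v| ≤ M` make it lose to `(x, 0)`. Hence all competing points lie within
`C √ε` of `(x, 0)`, where the ordering hypothesis applies; so the gap
`sup_x (u^ε(x,0) - v_ε(x,0))` is at most `2M` and tends to `0` with `ε`. Any such function of `ε`
lies below a modulus of continuity: its least majorant among the functions `a + b ε` with
`a, b ≥ 0` is concave, nondecreasing and vanishes at `0`, hence continuous.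
-/

section Majorant

def affineMajorants (g : ℝ → ℝ) : Set (ℝ × ℝ) :=
  {p | 0 ≤ p.1 ∧ 0 ≤ p.2 ∧ ∀ s, 0 < s → g s ≤ p.1 + p.2 * s}

/-- `max t 0` extends the majorant constantly to `t < 0`, keeping it monotone and continuous. -/
noncomputable def concaveMajorant (g : ℝ → ℝ) (t : ℝ) : ℝ :=
  sInf ((fun p : ℝ × ℝ => p.1 + p.2 * max t 0) '' affineMajorants g)

variable {g : ℝ → ℝ} {B : ℝ}

lemma exists_mem_affineMajorants (hB : ∀ s, 0 < s → g s ≤ B)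
    (hg : ∀ c > 0, ∀ᶠ s in 𝓝[>] 0, g s ≤ c) {c : ℝ} (hc : 0 < c) :
    ∃ b, (c, b) ∈ affineMajorants g := by
  obtain ⟨τ, hτ, hτg⟩ := (nhdsGT_basis (0 : ℝ)).eventually_iff.1 (hg c hc)
  refine ⟨max B 0 / τ, hc.le, by positivity, fun s hs => ?_⟩
  have hslope : 0 ≤ max B 0 / τ * s := by positivity
  rcases lt_or_ge s τ with hsτ | hτs
  · linarith [hτg ⟨hs, hsτ⟩]
  · have : max B 0 ≤ max B 0 / τ * s := by
      rw [div_mul_eq_mul_div, le_div_iff₀ hτ]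
      exact mul_le_mul_of_nonneg_left hτs (le_max_right B 0)
    linarith [hB s hs, le_max_left B 0]

lemma affineMajorants_nonempty (hB : ∀ s, 0 < s → g s ≤ B)
    (hg : ∀ c > 0, ∀ᶠ s in 𝓝[>] 0, g s ≤ c) : (affineMajorants g).Nonempty :=
  let ⟨_, hb⟩ := exists_mem_affineMajorants hB hg one_pos
  ⟨_, hb⟩

lemma concaveMajorant_le {p : ℝ × ℝ} (hp : p ∈ affineMajorants g) (t : ℝ) :
    concaveMajorant g t ≤ p.1 + p.2 * max t 0 := by
  refine csInf_le ⟨0, ?_⟩ (mem_image_of_mem _ hp)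
  rintro _ ⟨q, ⟨hq₁, hq₂, -⟩, rfl⟩
  have := le_max_right t 0
  positivity

lemma le_concaveMajorant (hne : (affineMajorants g).Nonempty) {t z : ℝ}
    (h : ∀ p ∈ affineMajorants g, z ≤ p.1 + p.2 * max t 0) : z ≤ concaveMajorant g t :=
  le_csInf (hne.image _) (forall_mem_image.2 h)

lemma concaveMajorant_nonneg (hne : (affineMajorants g).Nonempty) (t : ℝ) :
    0 ≤ concaveMajorant g t :=
  le_concaveMajorant hne fun p ⟨hp₁, hp₂, _⟩ => by
    have := le_max_right t 0
    positivity

lemma le_concaveMajorant_self (hne : (affineMajorants g).Nonempty) {s : ℝ} (hs : 0 < s) :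
    g s ≤ concaveMajorant g s :=
  le_concaveMajorant hne fun _ hp => by rw [max_eq_left hs.le]; exact hp.2.2 s hs

lemma concaveMajorant_zero (hB : ∀ s, 0 < s → g s ≤ B)
    (hg : ∀ c > 0, ∀ᶠ s in 𝓝[>] 0, g s ≤ c) : concaveMajorant g 0 = 0 := by
  refine le_antisymm (le_of_forall_pos_le_add fun c hc => ?_)
    (concaveMajorant_nonneg (affineMajorants_nonempty hB hg) 0)
  obtain ⟨b, hb⟩ := exists_mem_affineMajorants hB hg hc
  simpa using concaveMajorant_le hb 0

lemma monotone_concaveMajorant (hne : (affineMajorants g).Nonempty) :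
    Monotone (concaveMajorant g) := fun t t' htt' =>
  le_concaveMajorant hne fun p hp => (concaveMajorant_le hp t).trans <| by
    have := hp.2.1
    gcongr

lemma concaveOn_concaveMajorant (hne : (affineMajorants g).Nonempty) :
    ConcaveOn ℝ (Ici 0) (concaveMajorant g) := by
  refine ⟨convex_Ici 0, fun x hx y hy a b ha hb hab => le_concaveMajorant hne fun p hp => ?_⟩
  rw [mem_Ici] at hx hy
  have hxy : (0 : ℝ) ≤ a • x + b • y := by simp only [smul_eq_mul]; positivity
  have hpx := concaveMajorant_le hp x
  have hpy := concaveMajorant_le hp y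
  rw [max_eq_left hx] at hpx
  rw [max_eq_left hy] at hpy
  rw [max_eq_left hxy]
  simp only [smul_eq_mul]
  calc a * concaveMajorant g x + b * concaveMajorant g y
      ≤ a * (p.1 + p.2 * x) + b * (p.1 + p.2 * y) := by gcongr
    _ = p.1 + p.2 * (a * x + b * y) := by linear_combination p.1 * hab

lemma continuousAt_concaveMajorant_zero (hB : ∀ s, 0 < s → g s ≤ B)
    (hg : ∀ c > 0, ∀ᶠ s in 𝓝[>] 0, g s ≤ c) : ContinuousAt (concaveMajorant g) 0 := by
  have hne := affineMajorants_nonempty hB hg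
  rw [ContinuousAt, concaveMajorant_zero hB hg]
  refine tendsto_order.2 ⟨fun a ha => Eventually.of_forall fun t =>
      ha.trans_le (concaveMajorant_nonneg hne t), fun a ha => ?_⟩
  obtain ⟨b, hb⟩ := exists_mem_affineMajorants hB hg (half_pos ha)
  have hlim : Tendsto (fun t : ℝ => a / 2 + b * max t 0) (𝓝 0) (𝓝 (a / 2 + b * max 0 0)) :=
    (Continuous.tendsto (by fun_prop) 0)
  refine (hlim.eventually (gt_mem_nhds ?_)).mono fun t ht => (concaveMajorant_le hb t).trans_lt ht
  simp only [max_self, mul_zero, add_zero]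
  exact half_lt_self ha

lemma continuous_concaveMajorant (hB : ∀ s, 0 < s → g s ≤ B)
    (hg : ∀ c > 0, ∀ᶠ s in 𝓝[>] 0, g s ≤ c) : Continuous (concaveMajorant g) := by
  have hOn : ContinuousOn (concaveMajorant g) (Ici 0) :=
    (concaveOn_concaveMajorant (affineMajorants_nonempty hB hg)).continuousOn_Ici
      (continuousAt_concaveMajorant_zero hB hg).continuousWithinAt
  have hmax : concaveMajorant g = concaveMajorant g ∘ fun t => max t 0 := by
    funext t
    simp only [Function.comp, concaveMajorant, max_eq_left (le_max_right t 0)]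
  rw [hmax]
  exact hOn.comp_continuous (by fun_prop) fun t => le_max_right t 0

theorem exists_modulus_of_continuity_ge (hB : ∀ s, 0 < s → g s ≤ B)
    (hg : ∀ c > 0, ∀ᶠ s in 𝓝[>] 0, g s ≤ c) :
    ∃ ω : ℝ → ℝ, Continuous ω ∧ Monotone ω ∧ ω 0 = 0 ∧ ∀ s, 0 < s → g s ≤ ω s :=
  have hne := affineMajorants_nonempty hB hg
  ⟨concaveMajorant g, continuous_concaveMajorant hB hg, monotone_concaveMajorant hne,
    concaveMajorant_zero hB hg, fun _ hs => le_concaveMajorant_self hne hs⟩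

end Majorant

section Convolution

variable {E : Type*} [SeminormedAddCommGroup E] {u v : E → ℝ → ℝ} {M c δ ε : ℝ}

noncomputable def supConv (u : E → ℝ → ℝ) (ε : ℝ) (x : E) (t : ℝ) : ℝ :=
  sSup {a | ∃ y : E, ∃ s : ℝ, 0 ≤ s ∧ a = u y s - (‖x - y‖ ^ 2 + (t - s) ^ 2) / ε}

noncomputable def infConv (v : E → ℝ → ℝ) (ε : ℝ) (x : E) (t : ℝ) : ℝ :=
  sInf {a | ∃ y : E, ∃ s : ℝ, 0 ≤ s ∧ a = v y s + (‖x - y‖ ^ 2 + (t - s) ^ 2) / ε}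

lemma Real.sSup_le_sInf_add {S T : Set ℝ} (hS : S.Nonempty) (hT : T.Nonempty)
    (h : ∀ a ∈ S, ∀ b ∈ T, a ≤ b + c) : sSup S ≤ sInf T + c :=
  sub_le_iff_le_add.1 <| le_csInf hT fun b hb =>
    sub_le_iff_le_add.2 <| csSup_le hS fun a ha => h a ha b hb

lemma supConv_le_infConv_add (x : E) (t : ℝ)
    (h : ∀ y s y' s', 0 ≤ s → 0 ≤ s' → u y s - (‖x - y‖ ^ 2 + (t - s) ^ 2) / ε ≤
      v y' s' + (‖x - y'‖ ^ 2 + (t - s') ^ 2) / ε + c) :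
    supConv u ε x t ≤ infConv v ε x t + c := by
  refine Real.sSup_le_sInf_add ⟨_, x, 0, le_rfl, rfl⟩ ⟨_, x, 0, le_rfl, rfl⟩ ?_
  rintro _ ⟨y, s, hs, rfl⟩ _ ⟨y', s', hs', rfl⟩
  exact h y s y' s' hs hs'

lemma supConv_sub_infConv_le (hu : ∀ y s, u y s ≤ M) (hv : ∀ y s, -M ≤ v y s) (hε : 0 < ε)
    (x : E) (t : ℝ) : supConv u ε x t - infConv v ε x t ≤ 2 * M := by
  suffices supConv u ε x t ≤ infConv v ε x t + 2 * M by linarith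
  refine supConv_le_infConv_add x t fun y s y' s' _ _ => ?_
  have : 0 ≤ (‖x - y‖ ^ 2 + (t - s) ^ 2) / ε := by positivity
  have : 0 ≤ (‖x - y'‖ ^ 2 + (t - s') ^ 2) / ε := by positivity
  linarith [hu y s, hv y' s']

lemma abs_lt_of_sq_add_sq_lt {a b r : ℝ} (h : a ^ 2 + b ^ 2 < r ^ 2) (hr : 0 ≤ r) :
    |a| < r ∧ |b| < r :=
  ⟨abs_lt_of_sq_lt_sq (by nlinarith) hr, abs_lt_of_sq_lt_sq (by nlinarith) hr⟩

/-- A competitor `(y, s)` with penalty above `2M` loses to `(x, 0)`; the others lie within `δ / 2`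
of `(x, 0)`, where the ordering hypothesis applies. -/
lemma sub_penalty_le_add_penalty (hu : ∀ y s, u y s ≤ M) (hv : ∀ y s, -M ≤ v y s)
    (hord : ∀ y y' s s', ‖y - y'‖ < δ → |s| < δ → |s'| < δ → 0 ≤ s → 0 ≤ s' →
      u y s ≤ v y' s' + c)
    (hc : 0 ≤ c) (hδ : 0 < δ) (hε : 0 < ε) (hεδ : 8 * M * ε < δ ^ 2) (x y y' : E) {s s' : ℝ}
    (hs : 0 ≤ s) (hs' : 0 ≤ s') :
    u y s - (‖x - y‖ ^ 2 + (0 - s) ^ 2) / ε ≤ v y' s' + (‖x - y'‖ ^ 2 + (0 - s') ^ 2) / ε + c := by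
  have far {z : E} {r : ℝ} (h : (δ / 2) ^ 2 ≤ ‖x - z‖ ^ 2 + (0 - r) ^ 2) :
      2 * M < (‖x - z‖ ^ 2 + (0 - r) ^ 2) / ε := by
    rw [lt_div_iff₀ hε]; nlinarith
  have hP : 0 ≤ (‖x - y‖ ^ 2 + (0 - s) ^ 2) / ε := by positivity
  have hP' : 0 ≤ (‖x - y'‖ ^ 2 + (0 - s') ^ 2) / ε := by positivity
  rcases lt_or_ge (‖x - y‖ ^ 2 + (0 - s) ^ 2) ((δ / 2) ^ 2) with hnear | hfar
  · rcases lt_or_ge (‖x - y'‖ ^ 2 + (0 - s') ^ 2) ((δ / 2) ^ 2) with hnear' | hfar'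
    · obtain ⟨hxy, hs0⟩ := abs_lt_of_sq_add_sq_lt hnear (by positivity)
      obtain ⟨hxy', hs0'⟩ := abs_lt_of_sq_add_sq_lt hnear' (by positivity)
      rw [abs_norm] at hxy hxy'
      rw [zero_sub, abs_neg] at hs0 hs0'
      have hyy' : ‖y - y'‖ < δ := calc
        ‖y - y'‖ = ‖(x - y') - (x - y)‖ := by rw [sub_sub_sub_cancel_left]
        _ ≤ ‖x - y'‖ + ‖x - y‖ := norm_sub_le _ _
        _ < δ := by linarith
      linarith [hord y y' s s' hyy' (by linarith) (by linarith) hs hs']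
    · linarith [far hfar', hu y s, hv y' s']
  · linarith [far hfar, hu y s, hv y' s']

lemma eventually_supConv_le_infConv_add (hu : ∀ y s, u y s ≤ M) (hv : ∀ y s, -M ≤ v y s)
    (horder : ∀ c > (0 : ℝ), ∃ δ > (0 : ℝ), ∀ y y' s s', ‖y - y'‖ < δ → |s| < δ → |s'| < δ →
      0 ≤ s → 0 ≤ s' → u y s ≤ v y' s' + c)
    (hc : 0 < c) : ∀ᶠ ε in 𝓝[>] 0, ∀ x, supConv u ε x 0 ≤ infConv v ε x 0 + c := by
  obtain ⟨δ, hδ, hord⟩ := horder c hc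
  have hsmall : ∀ᶠ ε in 𝓝 (0 : ℝ), 8 * M * ε < δ ^ 2 :=
    (Continuous.tendsto (by fun_prop) 0).eventually (gt_mem_nhds (by simpa using pow_pos hδ 2))
  filter_upwards [self_mem_nhdsWithin, nhdsWithin_le_nhds hsmall] with ε hε hεδ x
  exact supConv_le_infConv_add x 0 fun y s y' s' hs hs' =>
    sub_penalty_le_add_penalty hu hv hord hc.le hδ hε hεδ x y y' hs hs'

end Convolution

theorem stmt19_general (n : ℕ) (u v : EuclideanSpace ℝ (Fin n) → ℝ → ℝ)
    (M : ℝ) (hu_bd : ∀ x t, |u x t| ≤ M) (hv_bd : ∀ x t, |v x t| ≤ M)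
    (horder : ∀ ε > (0:ℝ), ∃ δ > (0:ℝ), ∀ x y t s, ‖x - y‖ < δ → |t| < δ → |s| < δ →
        0 ≤ t → 0 ≤ s → u x t ≤ v y s + ε)
    (ue ve : ℝ → EuclideanSpace ℝ (Fin n) → ℝ → ℝ)
    (hue : ∀ ε, 0 < ε → ∀ x t, ue ε x t =
        sSup { a : ℝ | ∃ y : EuclideanSpace ℝ (Fin n), ∃ s : ℝ, 0 ≤ s ∧
            a = u y s - (‖x - y‖ ^ 2 + (t - s) ^ 2) / ε })
    (hve : ∀ ε, 0 < ε → ∀ x t, ve ε x t =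
        sInf { a : ℝ | ∃ y : EuclideanSpace ℝ (Fin n), ∃ s : ℝ, 0 ≤ s ∧
            a = v y s + (‖x - y‖ ^ 2 + (t - s) ^ 2) / ε }) :
    ∃ ω : ℝ → ℝ, Continuous ω ∧ Monotone ω ∧ ω 0 = 0 ∧
      ∃ ε₀ > (0:ℝ), ∀ ε, 0 < ε → ε < ε₀ →
        ∀ x, ue ε x 0 ≤ ve ε x 0 + ω ε := by
  have hu : ∀ y s, u y s ≤ M := fun y s => (abs_le.1 (hu_bd y s)).2
  have hv : ∀ y s, -M ≤ v y s := fun y s => (abs_le.1 (hv_bd y s)).1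
  have hgap_le : ∀ ε, 0 < ε → ∀ x, supConv u ε x 0 - infConv v ε x 0 ≤ 2 * M :=
    fun ε hε x => supConv_sub_infConv_le hu hv hε x 0
  obtain ⟨ω, hω_cont, hω_mono, hω_zero, hω_ge⟩ :=
    exists_modulus_of_continuity_ge (g := fun ε => ⨆ x, (supConv u ε x 0 - infConv v ε x 0))
      (fun ε hε => ciSup_le (hgap_le ε hε)) fun c hc =>
        (eventually_supConv_le_infConv_add hu hv horder hc).mono fun ε hε =>
          ciSup_le fun x => sub_le_iff_le_add'.2 (hε x)
  refine ⟨ω, hω_cont, hω_mono, hω_zero, 1, one_pos, fun ε hε _ x => ?_⟩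
  have hgap := (le_ciSup ⟨2 * M, forall_mem_range.2 (hgap_le ε hε)⟩ x).trans (hω_ge ε hε)
  rw [hue ε hε, hve ε hε]
  exact sub_le_iff_le_add'.1 hgap

/-- If bounded `u, v` on `ℝⁿ × [0,∞)` satisfy the uniform ordering near
`t = 0` (for every `ε > 0` there is `δ > 0` with `u(x,t) ≤ v(y,s) + ε` whenever
`|x-y| < δ`, `|t|,|s| < δ`), then the sup-convolution `u^ε` and inf-convolution `v_ε`
satisfy `u^ε(x,0) ≤ v_ε(x,0) + ω̃(ε)` for some modulus of continuity `ω̃`. -/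
theorem stmt19 (n : ℕ) (u v : EuclideanSpace ℝ (Fin n) → ℝ → ℝ)
    (M : ℝ) (hM : 0 < M) (hu_bd : ∀ x t, |u x t| ≤ M) (hv_bd : ∀ x t, |v x t| ≤ M)
    (horder : ∀ ε > (0:ℝ), ∃ δ > (0:ℝ), ∀ x y t s, ‖x - y‖ < δ → |t| < δ → |s| < δ →
        0 ≤ t → 0 ≤ s → u x t ≤ v y s + ε)
    (ue ve : ℝ → EuclideanSpace ℝ (Fin n) → ℝ → ℝ)
    (hue : ∀ ε, 0 < ε → ∀ x t, ue ε x t =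
        sSup { a : ℝ | ∃ y : EuclideanSpace ℝ (Fin n), ∃ s : ℝ, 0 ≤ s ∧
            a = u y s - (‖x - y‖ ^ 2 + (t - s) ^ 2) / ε })
    (hve : ∀ ε, 0 < ε → ∀ x t, ve ε x t =
        sInf { a : ℝ | ∃ y : EuclideanSpace ℝ (Fin n), ∃ s : ℝ, 0 ≤ s ∧
            a = v y s + (‖x - y‖ ^ 2 + (t - s) ^ 2) / ε }) :
    ∃ ω : ℝ → ℝ, Continuous ω ∧ Monotone ω ∧ ω 0 = 0 ∧
      ∃ ε₀ > (0:ℝ), ∀ ε, 0 < ε → ε < ε₀ →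
        ∀ x, ue ε x 0 ≤ ve ε x 0 + ω ε :=
  stmt19_general n u v M hu_bd hv_bd horder ue ve hue hve
end
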